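/- Let N ≥ 2 and suppose l > 10N and |k_1|,...,|k_{N-1}| ≥ l are integers; set b = (1, 1/k_1,...,1/k_{N-1}). If c = Σ_{i=1}^N α_i rot^{i-1}(b) with α_i ∈ ℤ, max|α_i| = 1, and at least two of the α_i nonzero, then ‖c‖² ≥ 2(1 − N/l)² > 1 + (N−1)/l² ≥ ‖b‖². -/

import Mathlib

/-!
The coordinate `i` of `c = Σ α_m rot^m(b)` is `Σ_m α_m b_{i-m}`. When `α_i ≠ 0` the diagonal term
`α_i b_0 = ±1` dominates, because each of the other `N - 1` terms has modulus at most `1/l`; so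
`|c_i| ≥ 1 - (N-1)/l`. Two nonzero coefficients give two such coordinates, whence
`‖c‖² ≥ 2(1 - N/l)²`, while `‖b‖² ≤ 1 + (N-1)/l²` directly, and `l > 10N` separates the two bounds.
-/

/-- The rotational shift operator on the Euclidean space `ℝ^N`. -/
def rotE {N : ℕ} [NeZero N] (x : EuclideanSpace ℝ (Fin N)) : EuclideanSpace ℝ (Fin N) :=
  WithLp.toLp 2 (fun i => x (i - 1))

lemma abs_sub_sum_erase_abs_le_abs_sum {ι : Type*} [DecidableEq ι] (s : Finset ι) (f : ι → ℝ)
    {i : ι} (hi : i ∈ s) : |f i| - ∑ m ∈ s.erase i, |f m| ≤ |∑ m ∈ s, f m| := by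
  rw [← Finset.add_sum_erase s f hi]
  have h := abs_add_le (f i + ∑ m ∈ s.erase i, f m) (-∑ m ∈ s.erase i, f m)
  rw [add_neg_cancel_right, abs_neg] at h
  linarith [Finset.abs_sum_le_sum_abs f (s.erase i)]

lemma Fin.sum_univ_erase_le {N : ℕ} [NeZero N] {f : Fin N → ℝ} {ε : ℝ} (i : Fin N)
    (hf : ∀ m, m ≠ i → f m ≤ ε) : ∑ m ∈ Finset.univ.erase i, f m ≤ ((N : ℝ) - 1) * ε := by
  have h := Finset.sum_le_card_nsmul (Finset.univ.erase i) f ε fun m hm =>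
    hf m (Finset.ne_of_mem_erase hm)
  rwa [nsmul_eq_mul, Finset.card_erase_of_mem (Finset.mem_univ i), Finset.card_univ,
    Fintype.card_fin, Nat.cast_sub NeZero.one_le, Nat.cast_one] at h

section rotE

variable {N : ℕ} [NeZero N]

open Fin.NatCast in
lemma rotE_iterate_apply (x : EuclideanSpace ℝ (Fin N)) (n : ℕ) (i : Fin N) :
    rotE^[n] x i = x (i - n) := by
  induction n generalizing x with
  | zero => rw [Nat.cast_zero, sub_zero]; rfl
  | succ n ih =>
    rw [Function.iterate_succ_apply, ih]
    show x ((i - n) - 1) = _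
    rw [sub_sub, Nat.cast_succ]

lemma sum_smul_rotE_iterate_apply (a : Fin N → ℝ) (x : EuclideanSpace ℝ (Fin N)) (i : Fin N) :
    (∑ m : Fin N, a m • rotE^[(m : ℕ)] x) i = ∑ m, a m * x (i - m) := by
  simp only [WithLp.ofLp_sum, WithLp.ofLp_smul, Finset.sum_apply, Pi.smul_apply, smul_eq_mul,
    rotE_iterate_apply, Fin.cast_val_eq_self]

lemma one_sub_mul_le_abs_sum_smul_rotE_iterate_apply {ε : ℝ} {x : EuclideanSpace ℝ (Fin N)}
    (hx0 : x 0 = 1) (hx : ∀ t, t ≠ 0 → |x t| ≤ ε) {a : Fin N → ℝ} (ha : ∀ m, |a m| ≤ 1)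
    {i : Fin N} (hai : |a i| = 1) :
    1 - ((N : ℝ) - 1) * ε ≤ |(∑ m : Fin N, a m • rotE^[(m : ℕ)] x) i| := by
  have hoff : ∑ m ∈ Finset.univ.erase i, |a m * x (i - m)| ≤ ((N : ℝ) - 1) * ε :=
    Fin.sum_univ_erase_le i fun m hm => by
      have hxm := hx (i - m) (sub_ne_zero.mpr hm.symm)
      rw [abs_mul]
      nlinarith [ha m, abs_nonneg (a m), abs_nonneg (x (i - m))]
  have hdiag := abs_sub_sum_erase_abs_le_abs_sum Finset.univ (fun m => a m * x (i - m))
    (Finset.mem_univ i)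
  rw [sum_smul_rotE_iterate_apply]
  simp only [sub_self, hx0, mul_one, hai] at hdiag
  linarith

end rotE

lemma EuclideanSpace.sq_add_sq_le_norm_sq {ι : Type*} [Fintype ι] (x : EuclideanSpace ℝ ι)
    {i j : ι} (hij : i ≠ j) : x i ^ 2 + x j ^ 2 ≤ ‖x‖ ^ 2 := by
  classical
  have h := Finset.sum_le_sum_of_subset_of_nonneg (Finset.subset_univ {i, j})
    fun m _ _ => sq_nonneg (x m)
  rwa [Finset.sum_pair hij, ← EuclideanSpace.real_norm_sq_eq] at h

lemma EuclideanSpace.norm_sq_le_of_abs_le {N : ℕ} [NeZero N] {ε : ℝ}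
    {x : EuclideanSpace ℝ (Fin N)} (hx0 : x 0 = 1) (hx : ∀ t, t ≠ 0 → |x t| ≤ ε) :
    ‖x‖ ^ 2 ≤ 1 + ((N : ℝ) - 1) * ε ^ 2 := by
  have hoff : ∑ t ∈ Finset.univ.erase 0, x t ^ 2 ≤ ((N : ℝ) - 1) * ε ^ 2 :=
    Fin.sum_univ_erase_le 0 fun t ht => by
      simpa only [sq_abs] using pow_le_pow_left₀ (abs_nonneg _) (hx t ht) 2
  rw [EuclideanSpace.real_norm_sq_eq, ← Finset.add_sum_erase _ _ (Finset.mem_univ 0), hx0]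
  linarith

lemma one_add_div_sq_lt_two_mul_one_sub_div_sq {N l : ℝ} (hN : 1 ≤ N) (hl : 10 * N < l) :
    1 + (N - 1) / l ^ 2 < 2 * (1 - N / l) ^ 2 := by
  have hl0 : 0 < l := by linarith
  rw [← sub_pos]
  have hnum : 0 < l ^ 2 - 4 * l * N + 2 * N ^ 2 - N + 1 := by nlinarith
  have hdiff : 2 * (1 - N / l) ^ 2 - (1 + (N - 1) / l ^ 2)
      = (l ^ 2 - 4 * l * N + 2 * N ^ 2 - N + 1) / l ^ 2 := by
    field_simp; ring
  rw [hdiff]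
  positivity

theorem stmt13_general (N : ℕ) [NeZero N] (l : ℕ) (hl : 10 * N < l)
    (k : Fin N → ℤ) (hk : ∀ i : Fin N, i ≠ 0 → (l : ℤ) ≤ |k i|)
    (b : EuclideanSpace ℝ (Fin N))
    (hb : ∀ i : Fin N, b i = if i = 0 then 1 else ((k i : ℝ))⁻¹)
    (α : Fin N → ℤ) (hα1 : ∀ i, |α i| ≤ 1)
    (hα2 : ∃ i j : Fin N, i ≠ j ∧ α i ≠ 0 ∧ α j ≠ 0)
    (c : EuclideanSpace ℝ (Fin N))
    (hc : c = ∑ i : Fin N, (α i : ℝ) • rotE^[(i : ℕ)] b) :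
    2 * (1 - (N : ℝ) / l) ^ 2 ≤ ‖c‖ ^ 2 ∧
    1 + ((N : ℝ) - 1) / l ^ 2 < 2 * (1 - (N : ℝ) / l) ^ 2 ∧
    ‖b‖ ^ 2 ≤ 1 + ((N : ℝ) - 1) / l ^ 2 := by
  have hN1 : (1 : ℝ) ≤ N := by exact_mod_cast NeZero.one_le
  have hlN : 10 * (N : ℝ) < l := by exact_mod_cast hl
  have hl0 : (0 : ℝ) < l := by linarith
  have hb0 : b 0 = 1 := by rw [hb, if_pos rfl]
  have hbt : ∀ t, t ≠ 0 → |b t| ≤ 1 / l := fun t ht => by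
    rw [hb, if_neg ht, abs_inv, one_div]
    exact inv_anti₀ hl0 (show (l : ℝ) ≤ |(k t : ℝ)| by exact_mod_cast hk t ht)
  have hcoord : ∀ i, α i ≠ 0 → 1 - (N : ℝ) / l ≤ |c i| := fun i hi => by
    have hαi : |(α i : ℝ)| = 1 := by exact_mod_cast le_antisymm (hα1 i) (Int.one_le_abs hi)
    have hdom := one_sub_mul_le_abs_sum_smul_rotE_iterate_apply hb0 hbt
      (a := fun m => (α m : ℝ)) (fun m => by exact_mod_cast hα1 m) hαi
    rw [← hc] at hdom
    have hoff : ((N : ℝ) - 1) * (1 / l) ≤ N / l := by rw [mul_one_div]; gcongr; linarith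
    linarith
  have hsq : ∀ i, α i ≠ 0 → (1 - (N : ℝ) / l) ^ 2 ≤ c i ^ 2 := fun i hi => by
    rw [← sq_abs (c i)]
    exact pow_le_pow_left₀ (by rw [sub_nonneg, div_le_one hl0]; linarith) (hcoord i hi) 2
  obtain ⟨i, j, hij, hi, hj⟩ := hα2
  refine ⟨?_, one_add_div_sq_lt_two_mul_one_sub_div_sq hN1 hlN, ?_⟩
  · linarith [hsq i hi, hsq j hj, c.sq_add_sq_le_norm_sq hij]
  · convert EuclideanSpace.norm_sq_le_of_abs_le hb0 hbt using 2
    ring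

/-- For `b = (1, 1/k_1, ..., 1/k_{N-1})` with `|k_i| ≥ l > 10N`, if
`c = Σ α_i rot^{i-1}(b)` with `max |α_i| = 1` and at least two `α_i` nonzero, then
`‖c‖² ≥ 2(1 − N/l)² > 1 + (N−1)/l² ≥ ‖b‖²`. -/
theorem stmt13 (N : ℕ) [NeZero N] (hN : 2 ≤ N) (l : ℕ) (hl : 10 * N < l)
    (k : Fin N → ℤ) (hk : ∀ i : Fin N, i ≠ 0 → (l : ℤ) ≤ |k i|)
    (b : EuclideanSpace ℝ (Fin N))
    (hb : ∀ i : Fin N, b i = if i = 0 then 1 else ((k i : ℝ))⁻¹)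
    (α : Fin N → ℤ) (hα1 : ∀ i, |α i| ≤ 1)
    (hα2 : ∃ i j : Fin N, i ≠ j ∧ α i ≠ 0 ∧ α j ≠ 0)
    (c : EuclideanSpace ℝ (Fin N))
    (hc : c = ∑ i : Fin N, (α i : ℝ) • rotE^[(i : ℕ)] b) :
    2 * (1 - (N : ℝ) / l) ^ 2 ≤ ‖c‖ ^ 2 ∧
    1 + ((N : ℝ) - 1) / l ^ 2 < 2 * (1 - (N : ℝ) / l) ^ 2 ∧
    ‖b‖ ^ 2 ≤ 1 + ((N : ℝ) - 1) / l ^ 2 :=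
  stmt13_general N l hl k hk b hb α hα1 hα2 c hc
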